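/- arXiv:math/9908164 — 2 statements merged into one kernel-verified Lean document; each statement's English description precedes it below -/
import Mathlib

section
/- Let V = a log ρ + (1/2)(b + c/ε) log((η−ε+√(ρ²+(η−ε)²))/ρ) + (1/2)(b − c/ε) log((η+ε+√(ρ²+(η+ε)²))/ρ) with ε = 1. Under the substitution ρ = √(R²−1) sin θ, η = R cos θ (with R > 1, 0 < θ < π), one has ρ V_η = (bR + c cos θ)√(R²−1} sin θ / (R² − cos²θ) and ρ V_ρ = (a(R² − cos²θ) − b(R²−1)cos θ + cR sin²θ)/(R² − cos²θ). -/
/-!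
In the coordinates `ρ = √(R²-1) sin θ`, `η = R cos θ` the distances from `(ρ, η)` to the
poles `(0, ±1)` are `R ± cos θ`. Since `∂_t log(t + √(ρ² + t²)) = 1/√(ρ² + t²)`, both partial
derivatives of `V` are rational in these distances, and after the substitution both identities
become rational identities with denominator `(R - cos θ)(R + cos θ) = R² - cos² θ`.
-/

open Real

theorem add_sqrt_sq_add_sq_pos {ρ : ℝ} (hρ : ρ ≠ 0) (t : ℝ) : 0 < t + √(ρ ^ 2 + t ^ 2) := by
  have : -√(ρ ^ 2 + t ^ 2) < t := neg_sqrt_lt_of_sq_lt (lt_add_of_pos_left _ (by positivity))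
  linarith

theorem hasDerivAt_log_add_sqrt_sq_add_sq {ρ : ℝ} (hρ : ρ ≠ 0) (x : ℝ) :
    HasDerivAt (fun t => log (t + √(ρ ^ 2 + t ^ 2))) (√(ρ ^ 2 + x ^ 2))⁻¹ x := by
  have hS : 0 < ρ ^ 2 + x ^ 2 := by positivity
  have hsum := (add_sqrt_sq_add_sq_pos hρ x).ne'
  have hsq : HasDerivAt (fun t => ρ ^ 2 + t ^ 2) (2 * x) x := by
    simpa using (hasDerivAt_pow 2 x).const_add (ρ ^ 2)
  refine (((hasDerivAt_id' x).add (hsq.sqrt hS.ne')).log hsum).congr_deriv ?_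
  simp only [Pi.add_apply]
  field_simp
  ring

theorem hasDerivAt_log_add_sqrt_sq_add_sq_sub_log (k : ℝ) {x : ℝ} (hx : x ≠ 0) :
    HasDerivAt (fun s => log (k + √(s ^ 2 + k ^ 2)) - log s) (-k / (x * √(x ^ 2 + k ^ 2))) x := by
  have hS : 0 < x ^ 2 + k ^ 2 := by positivity
  have hsum : k + √(x ^ 2 + k ^ 2) ≠ 0 := by
    simpa [add_comm (x ^ 2)] using (add_sqrt_sq_add_sq_pos hx k).ne'
  have hsq : HasDerivAt (fun s => s ^ 2 + k ^ 2) (2 * x) x := by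
    simpa using (hasDerivAt_pow 2 x).add_const (k ^ 2)
  refine ((((hsq.sqrt hS.ne').const_add k).log hsum).sub (hasDerivAt_log hx)).congr_deriv ?_
  have hSsq : √(x ^ 2 + k ^ 2) ^ 2 = x ^ 2 + k ^ 2 := sq_sqrt hS.le
  field_simp
  linear_combination -hSsq

theorem sqrt_prolate_dist {R : ℝ} (hR : 1 ≤ R) (θ e : ℝ) (he : e ^ 2 = 1) :
    √((√(R ^ 2 - 1) * sin θ) ^ 2 + (R * cos θ + e) ^ 2) = R + e * cos θ := by
  have hR1 : 0 ≤ R ^ 2 - 1 := by nlinarith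
  have hcos : (e * cos θ) ^ 2 ≤ 1 := by rw [mul_pow, he, one_mul]; exact cos_sq_le_one θ
  rw [← sqrt_sq (show 0 ≤ R + e * cos θ by nlinarith)]
  congr 1
  rw [mul_pow, sq_sqrt hR1, sin_sq]
  linear_combination (1 - cos θ ^ 2) * he

/-- Eguchi–Hanson II, ε = 1: with
`V = a log ρ + ½(b+c) log((η-1+√(ρ²+(η-1)²))/ρ) + ½(b-c) log((η+1+√(ρ²+(η+1)²))/ρ)`
and the substitution `ρ = √(R²-1) sin θ`, `η = R cos θ` (R > 1, 0 < θ < π):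
`ρ V_η = (bR + c cos θ)√(R²-1) sin θ/(R² - cos²θ)` and
`ρ V_ρ = (a(R² - cos²θ) - b(R²-1)cos θ + cR sin²θ)/(R² - cos²θ)`. -/
theorem eguchiHanson_monopole (a b c : ℝ) :
    ∀ R θ : ℝ, 1 < R → 0 < θ → θ < Real.pi →
      (let ρ : ℝ := Real.sqrt (R^2 - 1) * Real.sin θ
       let η : ℝ := R * Real.cos θ
       ρ * deriv (fun t : ℝ =>
          a * Real.log ρ +
          (1/2) * (b + c) * (Real.log (t - 1 + Real.sqrt (ρ^2 + (t - 1)^2)) - Real.log ρ) +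
          (1/2) * (b - c) * (Real.log (t + 1 + Real.sqrt (ρ^2 + (t + 1)^2)) - Real.log ρ)) η
        = (b * R + c * Real.cos θ) * Real.sqrt (R^2 - 1) * Real.sin θ /
            (R^2 - (Real.cos θ)^2)) ∧
      (let ρ : ℝ := Real.sqrt (R^2 - 1) * Real.sin θ
       let η : ℝ := R * Real.cos θ
       ρ * deriv (fun s : ℝ =>
          a * Real.log s +
          (1/2) * (b + c) * (Real.log (η - 1 + Real.sqrt (s^2 + (η - 1)^2)) - Real.log s) +
          (1/2) * (b - c) * (Real.log (η + 1 + Real.sqrt (s^2 + (η + 1)^2)) - Real.log s)) ρ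
        = (a * (R^2 - (Real.cos θ)^2) - b * (R^2 - 1) * Real.cos θ +
            c * R * (Real.sin θ)^2) / (R^2 - (Real.cos θ)^2)) := by
  intro R θ hR hθ0 hθπ
  dsimp only
  have hρ : √(R ^ 2 - 1) * sin θ ≠ 0 :=
    (mul_pos (sqrt_pos.mpr (by nlinarith)) (sin_pos_of_pos_of_lt_pi hθ0 hθπ)).ne'
  set ρ := √(R ^ 2 - 1) * sin θ with hρ_def
  set η := R * cos θ with hη_def
  have hdist_sub : √(ρ ^ 2 + (η - 1) ^ 2) = R - cos θ := by
    simpa [← sub_eq_add_neg] using sqrt_prolate_dist hR.le θ (-1) (by norm_num)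
  have hdist_add : √(ρ ^ 2 + (η + 1) ^ 2) = R + cos θ := by
    simpa using sqrt_prolate_dist hR.le θ 1 (by norm_num)
  have hsub : R - cos θ ≠ 0 := by linarith [cos_le_one θ]
  have hadd : R + cos θ ≠ 0 := by linarith [neg_one_le_cos θ]
  rw [show R ^ 2 - cos θ ^ 2 = (R - cos θ) * (R + cos θ) by ring]
  constructor
  · have h₁ := (hasDerivAt_log_add_sqrt_sq_add_sq hρ (η - 1)).comp_sub_const η 1
    have h₂ := (hasDerivAt_log_add_sqrt_sq_add_sq hρ (η + 1)).comp_add_const η 1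
    have hV := (((h₁.sub_const (log ρ)).const_mul ((1 / 2) * (b + c))).const_add (a * log ρ)).add
      ((h₂.sub_const (log ρ)).const_mul ((1 / 2) * (b - c)))
    simp only [Pi.add_def] at hV
    rw [hV.deriv, hdist_sub, hdist_add, hρ_def]
    field_simp
    ring
  · have h₁ := hasDerivAt_log_add_sqrt_sq_add_sq_sub_log (η - 1) hρ
    have h₂ := hasDerivAt_log_add_sqrt_sq_add_sq_sub_log (η + 1) hρ
    have hV := (((hasDerivAt_log hρ).const_mul a).add (h₁.const_mul ((1 / 2) * (b + c)))).add
      (h₂.const_mul ((1 / 2) * (b - c)))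
    simp only [Pi.add_def] at hV
    rw [hV.deriv, hdist_sub, hdist_add, hη_def, sin_sq]
    field_simp
    ring
end

section
/- For the metric g = dR²/(R²+1) + (R²+1)ds² + dθ² + sin²θ dφ² and the Killing field K = b∂_s + c∂_φ with (b,c) ≠ (0,0), the quotient metric g − g(K,·)⊗g(K,·)/g(K,K), expressed in the coordinates χ = bs + cφ, ψ = bφ − cs adapted so that K ∝ ∂/∂χ, restricts on the ψ-directions to (b²+c²)·[dR²/(R²+1) + dθ² + (R²+1)sin²θ/(b²(R²+1)+c²sin²θ) dψ²] up to overall normalization; in particular g(K,K) = b²(R²+1) + c² sin²θ. -/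
/-! In the `(s, φ)`-plane the metric is `diag(R²+1, sin²θ)`. The `dψ²` coefficient of the
quotient metric is the Gram determinant of `K` and `∂_ψ` divided by `g(K,K)`, and by the
Lagrange identity this Gram determinant is `(R²+1) sin²θ` times the square of the coordinate
determinant of `K` and `∂_ψ`, which is `1` by the choice of `ψ`. -/

theorem sum_diag_mul_of_even_coords_eq_zero (d₀ A d₂ B x₁ x₂ y₁ y₂ : ℝ) :
    ∑ i, ![d₀, A, d₂, B] i * ![0, x₁, 0, x₂] i * ![0, y₁, 0, y₂] i
      = A * x₁ * y₁ + B * x₂ * y₂ := by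
  simp [Fin.sum_univ_four]

theorem diag_gram_det_eq {α : Type*} [CommRing α] (A B x₁ x₂ y₁ y₂ : α) :
    (A * x₁ * x₁ + B * x₂ * x₂) * (A * y₁ * y₁ + B * y₂ * y₂) - (A * x₁ * y₁ + B * x₂ * y₂) ^ 2
      = A * B * (x₁ * y₂ - x₂ * y₁) ^ 2 := by
  ring

theorem sub_sq_div_eq_gram_div {F : Type*} [Field F] {a b c : F} (hc : c ≠ 0) :
    a - b ^ 2 / c = (c * a - b ^ 2) / c := by
  field_simp

theorem quotient_metric_coefficients_general (b c R θ : ℝ)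
    (hK : b^2 * (R^2 + 1) + c^2 * (Real.sin θ)^2 ≠ 0) :
    let gdiag : Fin 4 → ℝ := ![1 / (R^2 + 1), R^2 + 1, 1, (Real.sin θ)^2]
    let gv : (Fin 4 → ℝ) → (Fin 4 → ℝ) → ℝ := fun X Y => ∑ i, gdiag i * X i * Y i
    let K : Fin 4 → ℝ := ![0, b, 0, c]
    let W : Fin 4 → ℝ := ![0, -c / (b^2 + c^2), 0, b / (b^2 + c^2)]
    gv K K = b^2 * (R^2 + 1) + c^2 * (Real.sin θ)^2 ∧
    gv W W - (gv K W)^2 / gv K K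
      = (R^2 + 1) * (Real.sin θ)^2 / (b^2 * (R^2 + 1) + c^2 * (Real.sin θ)^2) := by
  intro gdiag gv K W
  have hbc : b^2 + c^2 ≠ 0 := by
    contrapose! hK
    obtain rfl : b = 0 := by nlinarith [sq_nonneg b, sq_nonneg c]
    obtain rfl : c = 0 := by nlinarith [sq_nonneg c]
    ring
  have hKK : gv K K = b^2 * (R^2 + 1) + c^2 * (Real.sin θ)^2 := by
    simp only [gv, gdiag, K, sum_diag_mul_of_even_coords_eq_zero]
    ring
  have hdet : b * (b / (b^2 + c^2)) - c * (-c / (b^2 + c^2)) = 1 := by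
    field_simp
    ring
  have hgram : gv K K * gv W W - gv K W ^ 2 = (R^2 + 1) * (Real.sin θ)^2 := by
    simp only [gv, gdiag, K, W, sum_diag_mul_of_even_coords_eq_zero]
    rw [diag_gram_det_eq, hdet, one_pow, mul_one]
  refine ⟨hKK, ?_⟩
  rw [sub_sq_div_eq_gram_div (hKK ▸ hK), hgram, hKK]

/-- For the metric `g = dR²/(R²+1) + (R²+1)ds² + dθ² + sin²θ dφ²`
and the Killing field `K = b ∂_s + c ∂_φ` with `(b,c) ≠ (0,0)`, in the adapted
coordinates `χ = bs + cφ`, `ψ = bφ - cs` (so `∂/∂ψ = (-c ∂_s + b ∂_φ)/(b²+c²)`),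
one has `g(K,K) = b²(R²+1) + c² sin²θ` and the coefficient of `dψ²` in the
quotient metric `h = g - g(K,·)²/g(K,K)` equals
`(R²+1) sin²θ / (b²(R²+1) + c² sin²θ)`. -/
theorem quotient_metric_coefficients (b c R θ : ℝ) (hbc : (b, c) ≠ (0, 0))
    (hK : b^2 * (R^2 + 1) + c^2 * (Real.sin θ)^2 ≠ 0) :
    let gdiag : Fin 4 → ℝ := ![1 / (R^2 + 1), R^2 + 1, 1, (Real.sin θ)^2]
    let gv : (Fin 4 → ℝ) → (Fin 4 → ℝ) → ℝ := fun X Y => ∑ i, gdiag i * X i * Y i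
    let K : Fin 4 → ℝ := ![0, b, 0, c]
    let W : Fin 4 → ℝ := ![0, -c / (b^2 + c^2), 0, b / (b^2 + c^2)]
    gv K K = b^2 * (R^2 + 1) + c^2 * (Real.sin θ)^2 ∧
    gv W W - (gv K W)^2 / gv K K
      = (R^2 + 1) * (Real.sin θ)^2 / (b^2 * (R^2 + 1) + c^2 * (Real.sin θ)^2) :=
  quotient_metric_coefficients_general b c R θ hK
end
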